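/- arXiv:1405.4755 — 2 statements merged into one kernel-verified Lean document; each statement's English description precedes it below -/
import Mathlib

section
/- If k_1, k_2, k_3 are positive integers, then the multinomial coefficient (k_1+k_2+k_3)!/(k_1!k_2!k_3!) is not a prime power p^r with p prime and r ≥ 1. -/
/-!
Writing `n = k₁ + k₂ + k₃`, the multinomial coefficient is `C(n, k₁) · C(k₂ + k₃, k₂)`, so it is
divisible by `C(n, kᵢ)` for each `i`. A binomial coefficient `C(n, k)` with `2 ≤ k ≤ n - 2` exceeds
`n`, whereas a prime power `p ^ s` dividing `C(n, k)` is at most `n` (Kummer/Legendre). Hence if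
the multinomial coefficient is a prime power, every `kᵢ` equals `1`, and then it is `3! = 6`.
-/

open Nat

namespace Nat

theorem le_choose_of_pos_of_lt {n k : ℕ} (hk : 0 < k) (hkn : k < n) : n ≤ n.choose k := by
  induction n generalizing k with
  | zero => omega
  | succ m ih =>
    obtain ⟨j, rfl⟩ : ∃ j, k = j + 1 := ⟨k - 1, by omega⟩
    rw [choose_succ_succ']
    rcases Nat.eq_zero_or_pos j with rfl | hj
    · simp [add_comm]
    · have := ih hj (by omega)
      have := choose_pos (show j + 1 ≤ m by omega)
      omega

theorem lt_choose_of_two_le {n k : ℕ} (hk : 2 ≤ k) (hkn : k + 2 ≤ n) : n < n.choose k := by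
  obtain ⟨m, rfl⟩ : ∃ m, n = m + 1 := ⟨n - 1, by omega⟩
  obtain ⟨j, rfl⟩ : ∃ j, k = j + 1 := ⟨k - 1, by omega⟩
  rw [choose_succ_succ']
  have := le_choose_of_pos_of_lt (n := m) (k := j) (by omega) (by omega)
  have := le_choose_of_pos_of_lt (n := m) (k := j + 1) (by omega) (by omega)
  omega

theorem choose_ne_prime_pow {n k p s : ℕ} (hp : p.Prime) (hk : 2 ≤ k) (hkn : k + 2 ≤ n) :
    n.choose k ≠ p ^ s := by
  intro h
  have hle : p ^ s ≤ n := by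
    simpa [h, hp.factorization_pow] using
      pow_factorization_choose_le (p := p) (k := k) (show 0 < n by omega)
  have := lt_choose_of_two_le hk hkn
  omega

end Nat

def trinomial (a b c : ℕ) : ℕ := (a + b + c)! / (a ! * b ! * c !)

theorem trinomial_eq_choose_mul_choose (a b c : ℕ) :
    trinomial a b c = (a + b + c).choose a * (b + c).choose b := by
  have hbc := choose_mul_factorial_mul_factorial (Nat.le_add_right b c)
  have habc := choose_mul_factorial_mul_factorial (Nat.le_add_right a (b + c))
  rw [Nat.add_sub_cancel_left] at hbc habc
  rw [trinomial, add_assoc]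
  refine Nat.div_eq_of_eq_mul_left (by positivity) ?_
  rw [← habc, ← hbc]
  ring

theorem trinomial_comm_left (a b c : ℕ) : trinomial a b c = trinomial b a c := by
  simp only [trinomial]; ring_nf

theorem trinomial_rotate (a b c : ℕ) : trinomial a b c = trinomial c a b := by
  simp only [trinomial]; ring_nf

theorem lt_two_of_trinomial_eq_prime_pow {a b c p r : ℕ} (hp : p.Prime) (hb : 0 < b) (hc : 0 < c)
    (h : trinomial a b c = p ^ r) : a < 2 := by
  by_contra! ha
  have hdvd : (a + b + c).choose a ∣ p ^ r :=
    h ▸ trinomial_eq_choose_mul_choose a b c ▸ dvd_mul_right _ _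
  obtain ⟨s, -, hs⟩ := (Nat.dvd_prime_pow hp).mp hdvd
  exact choose_ne_prime_pow hp ha (by omega) hs

theorem six_ne_prime_pow {p r : ℕ} (hp : p.Prime) : 6 ≠ p ^ r := by
  intro h
  have h2 : 2 = p := (prime_dvd_prime_iff_eq prime_two hp).1 <|
    prime_two.dvd_of_dvd_pow (show 2 ∣ p ^ r from h ▸ by norm_num)
  have h3 : 3 = p := (prime_dvd_prime_iff_eq prime_three hp).1 <|
    prime_three.dvd_of_dvd_pow (show 3 ∣ p ^ r from h ▸ by norm_num)
  omega

theorem trinomial_not_prime_pow (k₁ k₂ k₃ : ℕ) (h₁ : 0 < k₁) (h₂ : 0 < k₂) (h₃ : 0 < k₃) :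
    ¬ ∃ (p r : ℕ), p.Prime ∧ 1 ≤ r ∧
      (k₁ + k₂ + k₃).factorial / (k₁.factorial * k₂.factorial * k₃.factorial) = p ^ r := by
  rintro ⟨p, r, hp, -, h⟩
  change trinomial k₁ k₂ k₃ = p ^ r at h
  have hk₁ := lt_two_of_trinomial_eq_prime_pow hp h₂ h₃ h
  have hk₂ := lt_two_of_trinomial_eq_prime_pow hp h₁ h₃ (trinomial_comm_left k₁ k₂ k₃ ▸ h)
  have hk₃ := lt_two_of_trinomial_eq_prime_pow hp h₁ h₂ (trinomial_rotate k₁ k₂ k₃ ▸ h)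
  obtain ⟨rfl, rfl, rfl⟩ : k₁ = 1 ∧ k₂ = 1 ∧ k₃ = 1 := by omega
  exact six_ne_prime_pow hp h
end

section
/- If nonnegative integers k_1,...,k_n (not all zero) satisfy (k_1+···+k_n)!/(k_1!···k_n!) = m with m > 1 a prime power, then at most two of the k_i are nonzero. -/
/-!
Grouping the parts into two blocks with sums `a` and `b` exhibits `(a + b).choose a` as a divisor
of the multinomial coefficient. A binomial coefficient dividing a prime power is at most `a + b`
(Kummer: `p ^ v_p (n.choose r) ≤ n`), whereas `a + b < (a + b).choose a` once `a, b ≥ 2`. With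
three nonzero parts, pairing any two of them against the rest forces all three to be `1` and the
rest to vanish, and then the multinomial coefficient is divisible by `3.choose 2 * 2.choose 1 = 6`.
-/

open Finset

namespace Nat

theorem multinomial_eq_choose_mul_multinomial_mul_multinomial {α : Type*} [DecidableEq α]
    {s t : Finset α} (hts : t ⊆ s) (f : α → ℕ) :
    multinomial s f = (∑ i ∈ s, f i).choose (∑ i ∈ t, f i) * multinomial t f *
      multinomial (s \ t) f := by
  have hprod : 0 < ∏ i ∈ s, (f i)! := prod_factorial_pos s f
  refine Nat.eq_of_mul_eq_mul_left hprod ?_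
  rw [multinomial_spec, ← sum_sdiff hts, ← add_choose_mul_factorial_mul_factorial,
    ← multinomial_spec t, ← multinomial_spec (s \ t), ← prod_sdiff hts]
  ring

theorem add_le_choose_add {a b : ℕ} (ha : 1 ≤ a) (hb : 1 ≤ b) :
    a + b ≤ (a + b).choose a := by
  induction b, hb using Nat.le_induction with
  | base => simp
  | succ b hb ih =>
    obtain ⟨a, rfl⟩ : ∃ a', a = a' + 1 := ⟨a - 1, by omega⟩
    have := choose_pos (n := a + 1 + b) (k := a) (by omega)
    rw [show a + 1 + (b + 1) = a + 1 + b + 1 by ring, choose_succ_succ']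
    omega

theorem add_lt_choose_add {a b : ℕ} (ha : 2 ≤ a) (hb : 2 ≤ b) : a + b < (a + b).choose a := by
  obtain ⟨a, rfl⟩ : ∃ a', a = a' + 1 := ⟨a - 1, by omega⟩
  obtain ⟨b, rfl⟩ : ∃ b', b = b' + 1 := ⟨b - 1, by omega⟩
  have h₁ := add_le_choose_add (a := a) (b := b + 1) (by omega) (by omega)
  have h₂ := add_le_choose_add (a := a + 1) (b := b) (by omega) (by omega)
  rw [show a + 1 + b = a + (b + 1) by ring] at h₂
  rw [show a + 1 + (b + 1) = a + (b + 1) + 1 by ring, choose_succ_succ']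
  omega

theorem choose_le_of_dvd_prime_pow {p e n r : ℕ} (hp : p.Prime) (hn : 0 < n)
    (h : n.choose r ∣ p ^ e) : n.choose r ≤ n := by
  obtain ⟨s, -, hs⟩ := (dvd_prime_pow hp).mp h
  have hfac : (n.choose r).factorization p = s := by
    rw [hs, hp.factorization_pow, Finsupp.single_eq_same]
  simpa [hfac, ← hs] using pow_factorization_choose_le (p := p) (k := r) hn

theorem le_one_or_le_one_of_choose_add_dvd_prime_pow {p e a b : ℕ} (hp : p.Prime)
    (h : (a + b).choose a ∣ p ^ e) : a ≤ 1 ∨ b ≤ 1 := by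
  by_contra! hab
  exact (add_lt_choose_add hab.1 hab.2).not_ge (choose_le_of_dvd_prime_pow hp (by omega) h)

theorem sum_le_one_or_sum_sdiff_le_one_of_multinomial_dvd_prime_pow {α : Type*}
    [DecidableEq α] {p e : ℕ} {s t : Finset α} {f : α → ℕ} (hp : p.Prime) (hts : t ⊆ s)
    (h : multinomial s f ∣ p ^ e) : ∑ i ∈ t, f i ≤ 1 ∨ ∑ i ∈ s \ t, f i ≤ 1 := by
  rw [multinomial_eq_choose_mul_multinomial_mul_multinomial hts, ← sum_sdiff hts, add_comm] at h
  exact le_one_or_le_one_of_choose_add_dvd_prime_pow hp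
    ((dvd_mul_of_dvd_left (dvd_mul_right _ _) _).trans h)

theorem not_six_dvd_prime_pow {p e : ℕ} (hp : p.Prime) : ¬ 6 ∣ p ^ e := by
  intro h
  have h₂ : 2 = p := (prime_dvd_prime_iff_eq prime_two hp).mp
    (prime_two.dvd_of_dvd_pow (dvd_trans ⟨3, rfl⟩ h))
  have h₃ : 3 = p := (prime_dvd_prime_iff_eq prime_three hp).mp
    (prime_three.dvd_of_dvd_pow (dvd_trans ⟨2, rfl⟩ h))
  omega

end Nat

theorem multinomial_prime_pow_at_most_two_nonzero_general (n m : ℕ) (k : Fin n → ℕ)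
    (hpp : IsPrimePow m)
    (h : (∑ i, k i).factorial / ∏ i, (k i).factorial = m) :
    (Finset.univ.filter fun i => k i ≠ 0).card ≤ 2 := by
  obtain ⟨p, e, hp, -, rfl⟩ := (isPrimePow_nat_iff m).mp hpp
  change Nat.multinomial univ k = p ^ e at h
  by_contra! hcard
  obtain ⟨i, j, l, hi, hj, hl, hij, hil, hjl⟩ := two_lt_card_iff.mp hcard
  simp only [mem_filter, mem_univ, true_and] at hi hj hl
  have sum_compl_le_one :
      ∀ x y, x ≠ y → k x ≠ 0 → k y ≠ 0 → ∑ w ∈ univ \ {x, y}, k w ≤ 1 := by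
    intro x y hxy hx hy
    have := Nat.sum_le_one_or_sum_sdiff_le_one_of_multinomial_dvd_prime_pow hp
      (subset_univ {x, y}) h.dvd
    rw [sum_pair hxy] at this
    omega
  have le_sum_compl : ∀ x y z, z ≠ x → z ≠ y → k z ≤ ∑ w ∈ univ \ {x, y}, k w :=
    fun x y z hx hy => single_le_sum (fun _ _ => Nat.zero_le _) (by simp [hx, hy])
  have hki := (le_sum_compl j l i hij hil).trans (sum_compl_le_one j l hjl hj hl)
  have hkj := (le_sum_compl i l j hij.symm hjl).trans (sum_compl_le_one i l hil hi hl)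
  have hrest : ∑ w ∈ univ \ {i, j}, k w = 1 :=
    le_antisymm (sum_compl_le_one i j hij hi hj)
      (Nat.one_le_iff_ne_zero.mpr hl |>.trans (le_sum_compl i j l hil.symm hjl.symm))
  have h6 := Nat.multinomial_eq_choose_mul_multinomial_mul_multinomial (subset_univ {i, j}) k
  rw [h, ← sum_sdiff (subset_univ {i, j}), hrest, sum_pair hij, Nat.binomial_eq_choose hij,
    show k i = 1 by omega, show k j = 1 by omega] at h6
  norm_num at h6
  exact Nat.not_six_dvd_prime_pow hp ⟨_, h6⟩

theorem multinomial_prime_pow_at_most_two_nonzero (n m : ℕ) (k : Fin n → ℕ)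
    (hne : ∃ i, k i ≠ 0) (hm : 1 < m) (hpp : IsPrimePow m)
    (h : (∑ i, k i).factorial / ∏ i, (k i).factorial = m) :
    (Finset.univ.filter fun i => k i ≠ 0).card ≤ 2 :=
  multinomial_prime_pow_at_most_two_nonzero_general n m k hpp h
end
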